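/- If two vertices i ≠ j of a graph G have identical neighborhoods, then the product e_i e_j is a nontrivial central element of the Clifford graph algebra A_G; hence the center of A_G has dimension at least 2. -/

import Mathlib

open FreeAlgebra

inductive CliffordRel {V : Type} (G : SimpleGraph V) :
    FreeAlgebra ℂ V → FreeAlgebra ℂ V → Prop
  | sq (i : V) : CliffordRel G (ι ℂ i * ι ℂ i) (-1)
  | anticomm {i j : V} (h : G.Adj i j) :
      CliffordRel G (ι ℂ i * ι ℂ j) (-(ι ℂ j * ι ℂ i))
  | comm {i j : V} (hne : i ≠ j) (h : ¬ G.Adj i j) :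
      CliffordRel G (ι ℂ i * ι ℂ j) (ι ℂ j * ι ℂ i)

/-- The Clifford graph algebra of a simple graph. -/
abbrev GraphCliffordAlgebra {V : Type} (G : SimpleGraph V) :=
  RingQuot (CliffordRel G)

/-- The generator of the Clifford graph algebra corresponding to a vertex. -/
noncomputable def gen {V : Type} (G : SimpleGraph V) (i : V) :
    GraphCliffordAlgebra G :=
  RingQuot.mkAlgHom ℂ (CliffordRel G) (ι ℂ i)

/-- The monomial `e_α` : the ordered product of the generators in `α`. -/
noncomputable def mono {n : ℕ} (G : SimpleGraph (Fin n)) (α : Finset (Fin n)) :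
    GraphCliffordAlgebra G :=
  ((Finset.sort α (· ≤ ·)).map (gen G)).prod

variable {V : Type} {G : SimpleGraph V}

lemma gen_sq (v : V) : gen G v * gen G v = -1 := by
  have := RingQuot.mkAlgHom_rel ℂ (CliffordRel.sq (G := G) v)
  simpa [gen, map_mul, map_neg, map_one] using this

lemma gen_anticomm {u v : V} (h : G.Adj u v) :
    gen G u * gen G v = -(gen G v * gen G u) := by
  have := RingQuot.mkAlgHom_rel ℂ (CliffordRel.anticomm (G := G) h)
  simpa [gen, map_mul, map_neg] using this

lemma gen_comm {u v : V} (hne : u ≠ v) (h : ¬ G.Adj u v) :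
    gen G u * gen G v = gen G v * gen G u := by
  have := RingQuot.mkAlgHom_rel ℂ (CliffordRel.comm (G := G) hne h)
  simpa [gen, map_mul] using this

lemma adjoin_gen_eq_top : Algebra.adjoin ℂ (Set.range (gen G)) = ⊤ := by
  have : Set.range (gen G) = (RingQuot.mkAlgHom ℂ (CliffordRel G)) '' (Set.range (ι ℂ)) := by
    rw [← Set.range_comp]; rfl
  rw [this, ← AlgHom.map_adjoin, FreeAlgebra.adjoin_range_ι, Algebra.map_top]
  exact (AlgHom.range_eq_top _).mpr (RingQuot.mkAlgHom_surjective ℂ _)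

private lemma ring_aux1 {R : Type} [Ring R] (a : R) : -1 * a = a * -1 := by
  rw [neg_one_mul, mul_neg_one]

private lemma ring_aux2 {R : Type} [Ring R] (a b c : R) : -(a * b) * c = -(a * (b * c)) := by
  rw [neg_mul, mul_assoc]

private lemma ring_aux3 {R : Type} [Ring R] (a b c : R) : -(a * -(b * c)) = a * b * c := by
  rw [mul_neg, neg_neg, mul_assoc]

lemma central_of_same_nbhd {i j : V} (hij : i ≠ j)
    (h : G.neighborSet i = G.neighborSet j) :
    gen G i * gen G j ∈ Subalgebra.center ℂ (GraphCliffordAlgebra G) := by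
  have hadj : ∀ k, G.Adj i k ↔ G.Adj j k := by
    intro k
    constructor <;> intro hk
    · have : k ∈ G.neighborSet j := h ▸ hk
      exact this
    · have : k ∈ G.neighborSet i := h ▸ hk
      exact this
  have hnadj_ij : ¬ G.Adj i j := by
    intro hk
    exact G.irrefl ((hadj j).mp hk)
  have hcomm_ij : gen G i * gen G j = gen G j * gen G i := gen_comm hij hnadj_ij
  rw [Subalgebra.mem_center_iff]
  intro b
  have hb : b ∈ Algebra.adjoin ℂ (Set.range (gen G)) := by
    rw [adjoin_gen_eq_top]; trivial
  induction hb using Algebra.adjoin_induction with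
  | mem x hx =>
    obtain ⟨k, rfl⟩ := hx
    by_cases hki : k = i
    · subst hki
      calc gen G k * (gen G k * gen G j) = (gen G k * gen G k) * gen G j := by
            rw [mul_assoc]
      _ = -1 * gen G j := by rw [gen_sq]
      _ = gen G j * (-1) := ring_aux1 _
      _ = gen G j * (gen G k * gen G k) := by rw [gen_sq]
      _ = (gen G j * gen G k) * gen G k := by rw [mul_assoc]
      _ = (gen G k * gen G j) * gen G k := by rw [hcomm_ij]
    · by_cases hkj : k = j
      · subst hkj
        calc gen G k * (gen G i * gen G k) = gen G k * (gen G k * gen G i) := by rw [hcomm_ij]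
        _ = (gen G k * gen G k) * gen G i := (mul_assoc _ _ _).symm
        _ = -1 * gen G i := by rw [gen_sq]
        _ = gen G i * (-1) := ring_aux1 _
        _ = gen G i * (gen G k * gen G k) := by rw [gen_sq]
        _ = (gen G i * gen G k) * gen G k := (mul_assoc _ _ _).symm
      · by_cases hadjk : G.Adj k i
        · have hadjkj : G.Adj k j := ((hadj k).mp hadjk.symm).symm
          have h1 := gen_anticomm hadjk
          have h2 := gen_anticomm hadjkj
          calc gen G k * (gen G i * gen G j) = (gen G k * gen G i) * gen G j := (mul_assoc _ _ _).symm
          _ = -(gen G i * gen G k) * gen G j := by rw [h1]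
          _ = -(gen G i * (gen G k * gen G j)) := ring_aux2 _ _ _
          _ = -(gen G i * (-(gen G j * gen G k))) := by rw [h2]
          _ = (gen G i * gen G j) * gen G k := ring_aux3 _ _ _
        · have hnadjkj : ¬ G.Adj k j := fun hc => hadjk (((hadj k).mpr hc.symm).symm)
          have h1 := gen_comm hki hadjk
          have h2 := gen_comm hkj hnadjkj
          calc gen G k * (gen G i * gen G j) = (gen G k * gen G i) * gen G j := (mul_assoc _ _ _).symm
          _ = (gen G i * gen G k) * gen G j := by rw [h1]
          _ = gen G i * (gen G k * gen G j) := mul_assoc _ _ _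
          _ = gen G i * (gen G j * gen G k) := by rw [h2]
          _ = (gen G i * gen G j) * gen G k := (mul_assoc _ _ _).symm
  | algebraMap r => exact Algebra.commutes r _
  | add x y hx' hy' hx hy => rw [add_mul, mul_add, hx, hy]
  | mul x y hx' hy' hx hy => rw [mul_assoc, hy, ← mul_assoc, hx, mul_assoc]

variable {n : ℕ}

open scoped symmDiff Classical

noncomputable def sgn (G : SimpleGraph (Fin n)) (v : Fin n) (S : Finset (Fin n)) : ℂ :=
  (if v ∈ S then 1 else -1) * (-1) ^ (S.filter (fun u => G.Adj u v ∧ u < v)).card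

lemma sgn_ne_zero (G : SimpleGraph (Fin n)) (v : Fin n) (S : Finset (Fin n)) :
    sgn G v S ≠ 0 := by
  unfold sgn
  have h1 : ((-1 : ℂ)) ^ (S.filter (fun u => G.Adj u v ∧ u < v)).card ≠ 0 :=
    pow_ne_zero _ (by norm_num)
  split_ifs <;> simpa using h1

private lemma filter_symmDiff_singleton (p : Fin n → Prop) [DecidablePred p]
    (S : Finset (Fin n)) (x : Fin n) :
    (S ∆ {x}).filter p = if p x then (S.filter p) ∆ {x} else S.filter p := by
  split_ifs with hp <;> ext y <;>
    simp only [Finset.mem_symmDiff, Finset.mem_filter, Finset.mem_singleton] <;>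
    by_cases hy : y = x <;> subst_eqs <;> tauto

private lemma pow_symmDiff (A : Finset (Fin n)) (u : Fin n) :
    ((-1 : ℂ)) ^ (A ∆ {u}).card = -((-1) ^ A.card) := by
  by_cases hu : u ∈ A
  · have he : A ∆ {u} = A.erase u := by
      ext y
      simp only [Finset.mem_symmDiff, Finset.mem_singleton, Finset.mem_erase]
      by_cases hy : y = u <;> subst_eqs <;> tauto
    have hpos : 0 < A.card := Finset.card_pos.mpr ⟨u, hu⟩
    have hc : A.card = (A.erase u).card + 1 := by
      rw [Finset.card_erase_of_mem hu]; omega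
    rw [he, hc, pow_succ]; ring
  · have he : A ∆ {u} = insert u A := by
      ext y
      simp only [Finset.mem_symmDiff, Finset.mem_singleton, Finset.mem_insert]
      by_cases hy : y = u <;> subst_eqs <;> tauto
    rw [he, Finset.card_insert_of_notMem hu, pow_succ]; ring

private lemma pow_sq_aux (c : ℕ) : ((-1 : ℂ)) ^ c * (-1) ^ c = 1 := by
  rw [← pow_add]; exact Even.neg_one_pow ⟨c, rfl⟩

lemma sgn_self (G : SimpleGraph (Fin n)) (v : Fin n) (S : Finset (Fin n)) :
    sgn G v S * sgn G v (S ∆ {v}) = -1 := by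
  unfold sgn
  have hmem : v ∈ S ∆ {v} ↔ ¬ v ∈ S := by
    simp [Finset.mem_symmDiff]
  have hfil : (S ∆ {v}).filter (fun u => G.Adj u v ∧ u < v)
      = S.filter (fun u => G.Adj u v ∧ u < v) := by
    rw [filter_symmDiff_singleton]
    simp [lt_irrefl]
  rw [hfil]
  by_cases hv : v ∈ S
  · rw [if_pos hv, if_neg (show ¬ v ∈ S ∆ {v} from fun hc => (hmem.mp hc) hv)]
    linear_combination (-1 : ℂ) * pow_sq_aux (S.filter (fun u => G.Adj u v ∧ u < v)).card
  · rw [if_neg hv, if_pos (hmem.mpr hv)]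
    linear_combination (-1 : ℂ) * pow_sq_aux (S.filter (fun u => G.Adj u v ∧ u < v)).card

lemma sgn_swap (G : SimpleGraph (Fin n)) {u v : Fin n} (huv : u ≠ v) (S : Finset (Fin n)) :
    sgn G u S * sgn G v (S ∆ {u}) =
      (if G.Adj u v then -1 else 1) * (sgn G v S * sgn G u (S ∆ {v})) := by
  unfold sgn
  have hv : v ∈ S ∆ {u} ↔ v ∈ S := by
    simp only [Finset.mem_symmDiff, Finset.mem_singleton]
    constructor
    · rintro (⟨h1, _⟩ | ⟨h1, _⟩)
      · exact h1
      · exact absurd h1 (Ne.symm huv)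
    · intro h1
      exact Or.inl ⟨h1, Ne.symm huv⟩
  have hu : u ∈ S ∆ {v} ↔ u ∈ S := by
    simp only [Finset.mem_symmDiff, Finset.mem_singleton]
    constructor
    · rintro (⟨h1, _⟩ | ⟨h1, _⟩)
      · exact h1
      · exact absurd h1 huv
    · intro h1
      exact Or.inl ⟨h1, huv⟩
  rw [filter_symmDiff_singleton, filter_symmDiff_singleton]
  have hadj : G.Adj u v ↔ G.Adj v u := ⟨fun h => h.symm, fun h => h.symm⟩
  simp only [hv, hu]
  rcases lt_or_gt_of_ne huv with hlt | hlt
  · by_cases ha : G.Adj u v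
    · rw [if_pos (show G.Adj u v ∧ u < v from ⟨ha, hlt⟩),
        if_neg (show ¬ (G.Adj v u ∧ v < u) from fun hc => absurd hc.2 (not_lt_of_gt hlt)),
        if_pos ha, pow_symmDiff]
      ring
    · rw [if_neg (show ¬ (G.Adj u v ∧ u < v) from fun hc => ha hc.1),
        if_neg (show ¬ (G.Adj v u ∧ v < u) from fun hc => ha (hadj.mpr hc.1)), if_neg ha]
      ring
  · by_cases ha : G.Adj u v
    · rw [if_neg (show ¬ (G.Adj u v ∧ u < v) from fun hc => absurd hc.2 (not_lt_of_gt hlt)),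
        if_pos (show G.Adj v u ∧ v < u from ⟨hadj.mp ha, hlt⟩), if_pos ha, pow_symmDiff]
      ring
    · rw [if_neg (show ¬ (G.Adj u v ∧ u < v) from fun hc => ha hc.1),
        if_neg (show ¬ (G.Adj v u ∧ v < u) from fun hc => ha (hadj.mpr hc.1)), if_neg ha]
      ring
noncomputable def Eop (G : SimpleGraph (Fin n)) (v : Fin n) :
    Module.End ℂ (Finset (Fin n) → ℂ) where
  toFun f S := sgn G v S * f (S ∆ {v})
  map_add' f g := by funext S; simp [mul_add]
  map_smul' c f := by funext S; simp [smul_eq_mul]; ring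

lemma Eop_apply (G : SimpleGraph (Fin n)) (v : Fin n) (f : Finset (Fin n) → ℂ)
    (S : Finset (Fin n)) : Eop G v f S = sgn G v S * f (S ∆ {v}) := rfl

lemma Eop_sq (G : SimpleGraph (Fin n)) (v : Fin n) : Eop G v * Eop G v = -1 := by
  apply LinearMap.ext
  intro f
  funext S
  rw [Module.End.mul_apply, Eop_apply, Eop_apply, symmDiff_symmDiff_cancel_right]
  have : ((-1 : Module.End ℂ (Finset (Fin n) → ℂ)) f) S = -(f S) := rfl
  rw [this, ← mul_assoc, sgn_self]
  ring

lemma Eop_anticomm (G : SimpleGraph (Fin n)) {u v : Fin n} (h : G.Adj u v) :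
    Eop G u * Eop G v = -(Eop G v * Eop G u) := by
  have huv : u ≠ v := G.ne_of_adj h
  apply LinearMap.ext
  intro f
  funext S
  have hneg : ((-(Eop G v * Eop G u)) f) S = -(((Eop G v * Eop G u) f) S) := rfl
  rw [Module.End.mul_apply, Eop_apply, Eop_apply, hneg, Module.End.mul_apply, Eop_apply,
    Eop_apply, symmDiff_right_comm]
  have hs := sgn_swap G huv S
  rw [if_pos h] at hs
  linear_combination f (S ∆ {v} ∆ {u}) * hs

lemma Eop_comm (G : SimpleGraph (Fin n)) {u v : Fin n} (hne : u ≠ v) (h : ¬ G.Adj u v) :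
    Eop G u * Eop G v = Eop G v * Eop G u := by
  apply LinearMap.ext
  intro f
  funext S
  rw [Module.End.mul_apply, Eop_apply, Eop_apply, Module.End.mul_apply, Eop_apply,
    Eop_apply, symmDiff_right_comm]
  have hs := sgn_swap G hne S
  rw [if_neg h] at hs
  linear_combination f (S ∆ {v} ∆ {u}) * hs

noncomputable def rep (G : SimpleGraph (Fin n)) :
    GraphCliffordAlgebra G →ₐ[ℂ] Module.End ℂ (Finset (Fin n) → ℂ) :=
  RingQuot.liftAlgHom ℂ ⟨FreeAlgebra.lift ℂ (Eop G), by
    rintro x y ⟨⟩ <;>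
      simp only [map_mul, map_neg, map_one, FreeAlgebra.lift_ι_apply]
    · exact Eop_sq G _
    · exact Eop_anticomm G ‹_›
    · exact Eop_comm G ‹_› ‹_›⟩

lemma rep_gen (G : SimpleGraph (Fin n)) (v : Fin n) : rep G (gen G v) = Eop G v := by
  rw [gen, rep]
  exact (RingQuot.liftAlgHom_mkAlgHom_apply _ _ _ _).trans (FreeAlgebra.lift_ι_apply _ _)

lemma not_scalar (G : SimpleGraph (Fin n)) {i j : Fin n} (hij : i ≠ j) :
    ∀ z : ℂ, gen G i * gen G j ≠ algebraMap ℂ (GraphCliffordAlgebra G) z := by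
  intro z hz
  have h1 : Eop G i * Eop G j = algebraMap ℂ (Module.End ℂ (Finset (Fin n) → ℂ)) z := by
    have h0 := congrArg (rep G) hz
    rw [map_mul, rep_gen, rep_gen, AlgHom.commutes] at h0
    exact h0
  classical
  set δ : Finset (Fin n) → ℂ := fun S => if S = ∅ then 1 else 0 with hδ
  have h2 := congrFun (congrArg (fun (T : Module.End ℂ (Finset (Fin n) → ℂ)) => T δ) h1) {i, j}
  have hd1 : ({i, j} : Finset (Fin n)) ∆ {i} = {j} := by
    ext x
    simp only [Finset.mem_symmDiff, Finset.mem_insert, Finset.mem_singleton]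
    constructor
    · rintro (⟨h1 | h1, h2⟩ | ⟨h1, h2⟩)
      · exact absurd h1 h2
      · exact h1
      · exact absurd (Or.inl h1) h2
    · intro hx
      refine Or.inl ⟨Or.inr hx, fun hc => hij ?_⟩
      rw [← hc, hx]
  have hd2 : ({j} : Finset (Fin n)) ∆ {j} = ∅ := by
    rw [symmDiff_self]; rfl
  have hlhs : ((Eop G i * Eop G j) δ) {i, j} = sgn G i {i, j} * sgn G j {j} := by
    rw [Module.End.mul_apply, Eop_apply, hd1, Eop_apply, hd2, hδ]
    simp
  have hrhs : ((algebraMap ℂ (Module.End ℂ (Finset (Fin n) → ℂ)) z) δ) {i, j} = 0 := by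
    rw [Module.algebraMap_end_apply]
    have : ({i, j} : Finset (Fin n)) ≠ ∅ := Finset.insert_ne_empty _ _
    simp [hδ, this]
  rw [h1] at hlhs
  rw [hrhs] at hlhs
  exact (mul_ne_zero (sgn_ne_zero G i _) (sgn_ne_zero G j _)) hlhs.symm
private lemma ring_aux4 {R : Type} [Ring R] (a : R) : -1 * a = -a := by
  rw [neg_one_mul]

lemma mono_empty (G : SimpleGraph (Fin n)) : mono G ∅ = 1 := by
  unfold mono
  rw [Finset.sort_empty]
  rfl

lemma mono_singleton (G : SimpleGraph (Fin n)) (k : Fin n) : mono G {k} = gen G k := by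
  unfold mono
  rw [Finset.sort_singleton]
  simp

lemma gen_mul_mono_of_lt (G : SimpleGraph (Fin n)) (a : Fin n) (γ : Finset (Fin n))
    (hlt : ∀ b ∈ γ, a < b) : gen G a * mono G γ = mono G (insert a γ) := by
  have ha : a ∉ γ := fun hc => lt_irrefl a (hlt a hc)
  unfold mono
  rw [Finset.sort_insert _ (fun b hb => le_of_lt (hlt b hb)) ha, List.map_cons, List.prod_cons]

lemma gen_mul_mono_mem_span (G : SimpleGraph (Fin n)) :
    ∀ (m : ℕ) (k : Fin n) (β : Finset (Fin n)), β.card ≤ m →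
      gen G k * mono G β ∈
        Submodule.span ℂ (mono G '' {γ : Finset (Fin n) | γ ⊆ insert k β}) := by
  intro m
  induction m with
  | zero =>
    intro k β hβ
    have hβe : β = ∅ := Finset.card_eq_zero.mp (Nat.le_antisymm hβ (Nat.zero_le _))
    subst hβe
    rw [mono_empty, mul_one, ← mono_singleton G k]
    exact Submodule.subset_span ⟨{k}, by simp, rfl⟩
  | succ m ih =>
    intro k β hβ
    rcases Finset.eq_empty_or_nonempty β with rfl | hne
    · rw [mono_empty, mul_one, ← mono_singleton G k]
      exact Submodule.subset_span ⟨{k}, by simp, rfl⟩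
    · set a := β.min' hne with ha_def
      have haβ : a ∈ β := Finset.min'_mem _ _
      set β' := β.erase a with hβ'def
      have hlt' : ∀ b ∈ β', a < b := fun b hb =>
        lt_of_le_of_ne (Finset.min'_le _ _ (Finset.mem_of_mem_erase hb))
          (Ne.symm (Finset.ne_of_mem_erase hb))
      have hmono : mono G β = gen G a * mono G β' := by
        rw [gen_mul_mono_of_lt G a β' hlt', Finset.insert_erase haβ]
      have hcard : β'.card ≤ m := by
        have h1 : 0 < β.card := Finset.card_pos.mpr hne
        rw [hβ'def, Finset.card_erase_of_mem haβ]
        omega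
      have hβ'sub : β' ⊆ β := Finset.erase_subset _ _
      rcases lt_trichotomy k a with hk | hk | hk
      · have hltk : ∀ b ∈ β, k < b := fun b hb => lt_of_lt_of_le hk (Finset.min'_le _ _ hb)
        rw [gen_mul_mono_of_lt G k β hltk]
        exact Submodule.subset_span ⟨insert k β, Set.mem_setOf_eq ▸ subset_refl _, rfl⟩
      · have heq : gen G k * mono G β = -(mono G β') := by
          calc gen G k * mono G β = (gen G a * gen G a) * mono G β' := by
                rw [hmono, ← mul_assoc, hk]
          _ = -1 * mono G β' := by rw [gen_sq]
          _ = -(mono G β') := ring_aux4 _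
        rw [heq]
        exact Submodule.neg_mem _ (Submodule.subset_span
          ⟨β', fun y hy => Finset.mem_insert_of_mem (hβ'sub hy), rfl⟩)
      · have hIH := ih k β' hcard
        have hmain' : ∀ w ∈ Submodule.span ℂ (mono G '' {γ : Finset (Fin n) | γ ⊆ insert k β'}),
            gen G a * w ∈
            Submodule.span ℂ (mono G '' {γ : Finset (Fin n) | γ ⊆ insert k β}) := by
          intro w hw
          induction hw using Submodule.span_induction with
          | mem x hx =>
            obtain ⟨γ, hγ, rfl⟩ := hx
            have hγlt : ∀ b ∈ γ, a < b := by
              intro b hb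
              rcases Finset.mem_insert.mp (hγ hb) with rfl | hb'
              · exact hk
              · exact hlt' b hb'
            rw [gen_mul_mono_of_lt G a γ hγlt]
            refine Submodule.subset_span ⟨insert a γ, ?_, rfl⟩
            intro y hy
            rcases Finset.mem_insert.mp hy with rfl | hy'
            · exact Finset.mem_insert_of_mem haβ
            · rcases Finset.mem_insert.mp (hγ hy') with rfl | hy''
              · exact Finset.mem_insert_self _ _
              · exact Finset.mem_insert_of_mem (hβ'sub hy'')
          | zero => rw [mul_zero]; exact Submodule.zero_mem _
          | add x y hx hy hpx hpy => rw [mul_add]; exact Submodule.add_mem _ hpx hpy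
          | smul c x hx hpx => rw [mul_smul_comm]; exact Submodule.smul_mem _ _ hpx
        have hmain := hmain' _ hIH
        by_cases hadj : G.Adj k a
        · have heq : gen G k * mono G β = -(gen G a * (gen G k * mono G β')) := by
            calc gen G k * mono G β = (gen G k * gen G a) * mono G β' := by
                  rw [hmono, mul_assoc]
            _ = -(gen G a * gen G k) * mono G β' := by rw [gen_anticomm hadj]
            _ = -(gen G a * (gen G k * mono G β')) := ring_aux2 _ _ _
          rw [heq]
          exact Submodule.neg_mem _ hmain
        · have heq : gen G k * mono G β = gen G a * (gen G k * mono G β') := by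
            calc gen G k * mono G β = (gen G k * gen G a) * mono G β' := by
                  rw [hmono, mul_assoc]
            _ = (gen G a * gen G k) * mono G β' := by rw [gen_comm (ne_of_gt hk) hadj]
            _ = gen G a * (gen G k * mono G β') := mul_assoc _ _ _
          rw [heq]
          exact hmain

lemma gen_mul_mem_span (G : SimpleGraph (Fin n)) (k : Fin n) {x : GraphCliffordAlgebra G}
    (hx : x ∈ Submodule.span ℂ (Set.range (mono G))) :
    gen G k * x ∈ Submodule.span ℂ (Set.range (mono G)) := by
  induction hx using Submodule.span_induction with
  | mem x hx =>
    obtain ⟨β, rfl⟩ := hx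
    exact Submodule.span_le.mpr
      (fun y hy => Submodule.subset_span (by
        obtain ⟨γ, _, rfl⟩ := hy
        exact ⟨γ, rfl⟩))
      (gen_mul_mono_mem_span G β.card k β le_rfl)
  | zero => rw [mul_zero]; exact Submodule.zero_mem _
  | add x y hx hy hpx hpy => rw [mul_add]; exact Submodule.add_mem _ hpx hpy
  | smul c x hx hpx => rw [mul_smul_comm]; exact Submodule.smul_mem _ _ hpx

lemma word_mul_mem_span (G : SimpleGraph (Fin n)) (l : List (Fin n))
    {x : GraphCliffordAlgebra G} (hx : x ∈ Submodule.span ℂ (Set.range (mono G))) :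
    (l.map (gen G)).prod * x ∈ Submodule.span ℂ (Set.range (mono G)) := by
  induction l with
  | nil => simpa using hx
  | cons a l ihl =>
    rw [List.map_cons, List.prod_cons, mul_assoc]
    exact gen_mul_mem_span G a ihl

lemma span_mono_mul_mem (G : SimpleGraph (Fin n)) {x y : GraphCliffordAlgebra G}
    (hx : x ∈ Submodule.span ℂ (Set.range (mono G)))
    (hy : y ∈ Submodule.span ℂ (Set.range (mono G))) :
    x * y ∈ Submodule.span ℂ (Set.range (mono G)) := by
  induction hx using Submodule.span_induction with
  | mem x hx =>
    obtain ⟨β, rfl⟩ := hx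
    exact word_mul_mem_span G _ hy
  | zero => rw [zero_mul]; exact Submodule.zero_mem _
  | add x y' hx hy' hpx hpy => rw [add_mul]; exact Submodule.add_mem _ hpx hpy
  | smul c x hx hpx => rw [smul_mul_assoc]; exact Submodule.smul_mem _ _ hpx

lemma span_mono_eq_top (G : SimpleGraph (Fin n)) :
    Submodule.span ℂ (Set.range (mono G)) = ⊤ := by
  rw [eq_top_iff]
  intro x htop
  clear htop
  have hx : x ∈ Algebra.adjoin ℂ (Set.range (gen G)) := by
    rw [adjoin_gen_eq_top]; trivial
  induction hx using Algebra.adjoin_induction with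
  | mem y hy =>
    obtain ⟨k, rfl⟩ := hy
    rw [← mono_singleton G k]
    exact Submodule.subset_span ⟨{k}, rfl⟩
  | algebraMap r =>
    rw [Algebra.algebraMap_eq_smul_one, ← mono_empty G]
    exact Submodule.smul_mem _ _ (Submodule.subset_span ⟨∅, rfl⟩)
  | add x y hx hy hpx hpy => exact Submodule.add_mem _ hpx hpy
  | mul x y hx hy hpx hpy => exact span_mono_mul_mem G hpx hpy

lemma finite_dimensional_gca (G : SimpleGraph (Fin n)) :
    Module.Finite ℂ (GraphCliffordAlgebra G) :=
  ⟨Submodule.fg_def.mpr ⟨Set.range (mono G), Set.finite_range _, span_mono_eq_top G⟩⟩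

/-- If two distinct vertices `i ≠ j` of `G` have identical neighborhoods, then `e_i e_j` is a
nontrivial (non-scalar) central element of `A_G`; hence the center has dimension at least 2. -/
theorem same_neighborhoods_gives_central_element (n : ℕ) (G : SimpleGraph (Fin n))
    (i j : Fin n) (hij : i ≠ j) (h : G.neighborSet i = G.neighborSet j) :
    gen G i * gen G j ∈ Subalgebra.center ℂ (GraphCliffordAlgebra G) ∧
    (∀ z : ℂ, gen G i * gen G j ≠ algebraMap ℂ (GraphCliffordAlgebra G) z) ∧
    2 ≤ Module.finrank ℂ (Subalgebra.center ℂ (GraphCliffordAlgebra G)) := by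
  have hcent := central_of_same_nbhd hij h
  have hns := not_scalar G hij
  refine ⟨hcent, hns, ?_⟩
  haveI : Module.Finite ℂ (GraphCliffordAlgebra G) := finite_dimensional_gca G
  have hone : (1 : GraphCliffordAlgebra G) ∈ Subalgebra.center ℂ (GraphCliffordAlgebra G) :=
    Subalgebra.one_mem _
  set c := Subalgebra.center ℂ (GraphCliffordAlgebra G) with hc
  let f : Fin 2 → c := ![⟨gen G i * gen G j, hcent⟩, 1]
  have hli : LinearIndependent ℂ f := by
    apply LinearIndependent.of_comp c.val.toLinearMap
    have hcomp : c.val.toLinearMap ∘ f = ![gen G i * gen G j, 1] := by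
      funext idx
      fin_cases idx <;> rfl
    rw [hcomp, linearIndependent_fin2]
    constructor
    · simp only [Matrix.cons_val_one, Matrix.head_cons]
      intro h1
      apply hns 0
      rw [map_zero]
      calc gen G i * gen G j = (gen G i * gen G j) * 1 := (mul_one _).symm
      _ = (gen G i * gen G j) * 0 := by rw [show (1 : GraphCliffordAlgebra G) = 0 from h1]
      _ = 0 := mul_zero _
    · intro a ha
      simp only [Matrix.cons_val_one, Matrix.head_cons, Matrix.cons_val_zero] at ha
      exact hns a (by rw [← ha, Algebra.algebraMap_eq_smul_one])
  have hcard := hli.fintype_card_le_finrank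
  simpa using hcard
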